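/- arXiv:1809.01026 — 2 statements merged into one kernel-verified Lean document; each statement's English description precedes it below -/
import Mathlib

section
/- Let Λ be a k×n matching field and let J_Λ ⊆ K[P_I] be the ideal generated by all binomials ε_A ∏_{I∈A} P_I − ε_B ∏_{J∈B} P_J, where A and B range over multisets of k-subsets of [n] of equal cardinality whose associated Λ-tableaux are row-wise equal, and ε_A = ∏_{I∈A} sgn(Λ(I)). Then J_Λ equals the kernel of the monomial map φ_Λ : K[P_I] → K[x_{ij}] sending P_I to sgn(Λ(I))·x_{Λ(I)}. -/
open MvPolynomial

open MvPolynomial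

/-- The set of `k`-element subsets of `[n]`, indexing the Plücker variables `P_I`. -/
abbrev PV (k n : ℕ) := {I : Finset (Fin n) // I.card = k}

/-- The `r`-th smallest element of the `k`-subset `I`. -/
noncomputable def elt {k n : ℕ} (I : PV k n) (r : Fin k) : Fin n :=
  (I.1.orderIsoOfFin I.2 r : Fin n)

lemma elt_mem {k n : ℕ} (I : PV k n) (r : Fin k) : elt I r ∈ I.1 :=
  (I.1.orderIsoOfFin I.2 r).2

/-- A `k × n` matching field: a choice of a permutation in `S_k` for each `k`-subset of `[n]`. -/
abbrev MatchingField (k n : ℕ) := PV k n → Equiv.Perm (Fin k)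

/-- The monomial `x_{Λ(I)} = x_{σ(1) i₁} ⋯ x_{σ(k) i_k}` where `σ = Λ(I)`. -/
noncomputable def mfMon (K : Type) [Field K] {k n : ℕ} (Λ : MatchingField k n) (I : PV k n) :
    MvPolynomial (Fin k × Fin n) K :=
  ∏ r : Fin k, X (Λ I r, elt I r)

/-- The term `sgn(Λ(I)) ⬝ x_{Λ(I)}`. -/
noncomputable def mfTerm (K : Type) [Field K] {k n : ℕ} (Λ : MatchingField k n) (I : PV k n) :
    MvPolynomial (Fin k × Fin n) K :=
  ((Equiv.Perm.sign (Λ I) : ℤ) : MvPolynomial (Fin k × Fin n) K) * mfMon K Λ I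

/-- The monomial map `φ_Λ : K[P_I] → K[x_{ij}]`, `P_I ↦ sgn(Λ(I)) x_{Λ(I)}`. -/
noncomputable def mfMap (K : Type) [Field K] {k n : ℕ} (Λ : MatchingField k n) :
    MvPolynomial (PV k n) K →ₐ[K] MvPolynomial (Fin k × Fin n) K :=
  aeval (mfTerm K Λ)

/-- The matching field ideal `I_Λ = ker φ_Λ`. -/
noncomputable def mfIdeal (K : Type) [Field K] {k n : ℕ} (Λ : MatchingField k n) :
    Ideal (MvPolynomial (PV k n) K) :=
  RingHom.ker (mfMap K Λ).toRingHom

/-- The Plücker form `det X_I`, the maximal minor of the `k × n` matrix of variables on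
columns `I`. -/
noncomputable def pluckerForm (K : Type) [Field K] {k n : ℕ} (I : PV k n) :
    MvPolynomial (Fin k × Fin n) K :=
  Matrix.det (Matrix.of fun r c : Fin k => (X (r, elt I c) : MvPolynomial (Fin k × Fin n) K))

/-- The map `K[P_I] → K[x_{ij}]`, `P_I ↦ det X_I`. -/
noncomputable def pluckerMap (K : Type) [Field K] (k n : ℕ) :
    MvPolynomial (PV k n) K →ₐ[K] MvPolynomial (Fin k × Fin n) K :=
  aeval (pluckerForm K)

/-- The Plücker ideal `I_{k,n}`, the kernel of `P_I ↦ det X_I`. -/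
noncomputable def pluckerIdeal (K : Type) [Field K] (k n : ℕ) :
    Ideal (MvPolynomial (PV k n) K) :=
  RingHom.ker (pluckerMap K k n).toRingHom

/-- The weight of an exponent vector with respect to a weight `w` on the variables. -/
noncomputable def expWt {σ : Type*} (w : σ → ℝ) (m : σ →₀ ℕ) : ℝ :=
  m.sum fun s e => (e : ℝ) * w s

open Classical in
/-- The initial form `in_w(f)`: the sum of all terms of `f` of lowest `w`-weight. -/
noncomputable def initialForm {σ : Type*} {R : Type*} [CommRing R] (w : σ → ℝ)
    (f : MvPolynomial σ R) : MvPolynomial σ R :=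
  ∑ m ∈ f.support.filter (fun m => ∀ m' ∈ f.support, expWt w m ≤ expWt w m'),
    monomial m (f.coeff m)

/-- The initial ideal `in_w(I)`: the ideal generated by the initial forms of all elements. -/
noncomputable def initialIdeal {σ : Type*} {R : Type*} [CommRing R] (w : σ → ℝ)
    (I : Ideal (MvPolynomial σ R)) : Ideal (MvPolynomial σ R) :=
  Ideal.span {g | ∃ f ∈ I, g = initialForm w f}

/-- The weight matrix `M` induces the matching field `Λ` (so `Λ` is coherent): for every `I`
the initial form of the Plücker form `det X_I` is the single term `sgn(Λ(I)) x_{Λ(I)}`. -/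
def Induces (K : Type) [Field K] {k n : ℕ} (M : Fin k → Fin n → ℝ)
    (Λ : MatchingField k n) : Prop :=
  ∀ I : PV k n, initialForm (fun p => M p.1 p.2) (pluckerForm K I) = mfTerm K Λ I

/-- The induced weight `w_M` on the Plücker variables: `w_M(P_I)` is the `M`-weight of
`x_{Λ(I)}`. -/
noncomputable def wM {k n : ℕ} (M : Fin k → Fin n → ℝ) (Λ : MatchingField k n) :
    PV k n → ℝ :=
  fun I => ∑ r : Fin k, M (Λ I r) (elt I r)

/-- An ideal is quadratically generated if it is generated by its homogeneous elements of
degree `2`. -/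
def QuadGen {σ R : Type*} [CommRing R] (I : Ideal (MvPolynomial σ R)) : Prop :=
  I = Ideal.span {f | f ∈ I ∧ MvPolynomial.IsHomogeneous f 2}

/-- Two multisets `A`, `B` of `k`-subsets of `[n]` have row-wise equal `Λ`-tableaux: for each
row `i`, the multiset of entries placed in row `i` by the columns of `A` coincides with that of
`B`.  (The column of `I = {i₁ < ⋯ < i_k}` with `σ = Λ(I)` places `i_r` in row `σ(r)`, so the
entry of row `i` is the `σ⁻¹(i)`-th smallest element of `I`.) -/
def RowwiseEqual {k n : ℕ} (Λ : MatchingField k n) (A B : Multiset (PV k n)) : Prop :=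
  ∀ i : Fin k,
    A.map (fun I => elt I ((Λ I)⁻¹ i)) = B.map (fun I => elt I ((Λ I)⁻¹ i))

/-- The sign `ε_A = ∏_{I ∈ A} sgn(Λ(I))` of a multiset of columns. -/
def mfSign {k n : ℕ} (Λ : MatchingField k n) (A : Multiset (PV k n)) : ℤ :=
  (A.map (fun I => (Equiv.Perm.sign (Λ I) : ℤ))).prod

/-- The binomial `ε_A ∏_{I∈A} P_I − ε_B ∏_{J∈B} P_J` associated to a pair of multisets of
columns. -/
noncomputable def mfBinomial (K : Type) [Field K] {k n : ℕ} (Λ : MatchingField k n)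
    (A B : Multiset (PV k n)) : MvPolynomial (PV k n) K :=
  (mfSign Λ A : MvPolynomial (PV k n) K)
      * (A.map (fun I => (X I : MvPolynomial (PV k n) K))).prod
    - (mfSign Λ B : MvPolynomial (PV k n) K)
      * (B.map (fun I => (X I : MvPolynomial (PV k n) K))).prod


section Aux

variable (K : Type) [Field K] {k n : ℕ} (Λ : MatchingField k n)

/-- The exponent vector of the monomial `x_{Λ(I)}`. -/
noncomputable def mIdx (I : PV k n) : (Fin k × Fin n) →₀ ℕ :=
  ∑ r : Fin k, Finsupp.single (Λ I r, elt I r) 1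

/-- The exponent vector of the image of the monomial with columns `A`. -/
noncomputable def wtM (A : Multiset (PV k n)) : (Fin k × Fin n) →₀ ℕ :=
  (A.map (mIdx Λ)).sum

lemma prod_X_eq_monomial {α σ R : Type*} [CommSemiring R] (s : Finset α) (g : α → σ) :
    (∏ r ∈ s, (X (g r) : MvPolynomial σ R)) =
      monomial (∑ r ∈ s, Finsupp.single (g r) 1) 1 := by
  classical
  induction s using Finset.induction_on with
  | empty => simp
  | @insert a s h ih =>
      rw [Finset.prod_insert h, Finset.sum_insert h, ih, X, monomial_mul, one_mul]

lemma mfMon_eq (I : PV k n) : mfMon K Λ I = monomial (mIdx Λ I) 1 := by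
  rw [mfMon, mIdx, prod_X_eq_monomial]

lemma mIdx_apply (I : PV k n) (i : Fin k) (j : Fin n) :
    mIdx Λ I (i, j) = if elt I ((Λ I)⁻¹ i) = j then 1 else 0 := by
  classical
  rw [mIdx, Finset.sum_apply']
  rw [Finset.sum_eq_single ((Λ I)⁻¹ i)]
  · simp [Finsupp.single_apply, Prod.ext_iff]
  · intro r _ hr
    rw [Finsupp.single_apply, if_neg]
    intro h
    apply hr
    have : Λ I r = i := (Prod.ext_iff.mp h).1
    simp [← this]
  · simp

lemma wtM_cons (I : PV k n) (A : Multiset (PV k n)) :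
    wtM Λ (I ::ₘ A) = mIdx Λ I + wtM Λ A := by
  simp [wtM]

lemma count_rowMap (i : Fin k) (j : Fin n) (A : Multiset (PV k n)) :
    (A.map (fun I => elt I ((Λ I)⁻¹ i))).count j = wtM Λ A (i, j) := by
  classical
  induction A using Multiset.induction_on with
  | empty => simp [wtM]
  | cons I A ih =>
      rw [Multiset.map_cons, Multiset.count_cons, wtM_cons, Finsupp.add_apply, ih,
        mIdx_apply]
      simp [eq_comm, add_comm]

lemma rowwise_iff (A B : Multiset (PV k n)) :
    RowwiseEqual Λ A B ↔ wtM Λ A = wtM Λ B := by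
  classical
  constructor
  · intro h
    ext ⟨i, j⟩
    rw [← count_rowMap, ← count_rowMap, h i]
  · intro h i
    rw [Multiset.ext]
    intro j
    rw [count_rowMap, count_rowMap, h]

lemma card_eq_of_rowwise (hk : 1 ≤ k) {A B : Multiset (PV k n)}
    (h : RowwiseEqual Λ A B) : Multiset.card A = Multiset.card B := by
  have := congrArg Multiset.card (h ⟨0, hk⟩)
  simpa using this

lemma mfSign_cons (I : PV k n) (A : Multiset (PV k n)) :
    mfSign Λ (I ::ₘ A) = (Equiv.Perm.sign (Λ I) : ℤ) * mfSign Λ A := by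
  simp [mfSign]

lemma mfSign_mul_self (A : Multiset (PV k n)) : mfSign Λ A * mfSign Λ A = 1 := by
  induction A using Multiset.induction_on with
  | empty => simp [mfSign]
  | cons I A ih =>
      rw [mfSign_cons]
      have h1 : ((Equiv.Perm.sign (Λ I) : ℤ)) * (Equiv.Perm.sign (Λ I) : ℤ) = 1 :=
        by
        rcases Int.units_eq_one_or (Equiv.Perm.sign (Λ I)) with h | h <;> rw [h] <;> norm_num
      calc ((Equiv.Perm.sign (Λ I) : ℤ) * mfSign Λ A) *
            ((Equiv.Perm.sign (Λ I) : ℤ) * mfSign Λ A)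
          = ((Equiv.Perm.sign (Λ I) : ℤ) * (Equiv.Perm.sign (Λ I) : ℤ)) *
            (mfSign Λ A * mfSign Λ A) := by ring
        _ = 1 := by rw [h1, ih, one_mul]

lemma prod_mfTerm (A : Multiset (PV k n)) :
    (A.map (mfTerm K Λ)).prod = C ((mfSign Λ A : ℤ) : K) * monomial (wtM Λ A) 1 := by
  induction A using Multiset.induction_on with
  | empty => simp [mfSign, wtM, monomial_zero']
  | cons I A ih =>
      rw [Multiset.map_cons, Multiset.prod_cons, ih, mfTerm, mfMon_eq, mfSign_cons,
        wtM_cons, ← map_intCast (C : K →+* MvPolynomial (Fin k × Fin n) K)]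
      rw [Int.cast_mul, map_mul, mul_mul_mul_comm, monomial_mul, one_mul]

lemma monomial_toMultiset (a : PV k n →₀ ℕ) :
    (monomial a (1 : K) : MvPolynomial (PV k n) K) = ((a.toMultiset.map X).prod) := by
  classical
  induction a using Finsupp.induction with
  | zero => simp
  | single_add I e a hI he ih =>
      rw [Finsupp.toMultiset_add, Multiset.map_add, Multiset.prod_add, ← ih,
        Finsupp.toMultiset_single, Multiset.map_nsmul, Multiset.map_singleton,
        Multiset.prod_nsmul, Multiset.prod_singleton, X_pow_eq_monomial, monomial_mul, one_mul]

lemma mfMap_prod_X (A : Multiset (PV k n)) :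
    mfMap K Λ ((A.map X).prod) = (A.map (mfTerm K Λ)).prod := by
  rw [map_multiset_prod, Multiset.map_map]
  congr 1
  refine Multiset.map_congr rfl fun I _ => ?_
  simp [mfMap]

lemma mfMap_monomial (a : PV k n →₀ ℕ) (c : K) :
    mfMap K Λ (monomial a c)
      = C (((mfSign Λ a.toMultiset : ℤ) : K) * c) * monomial (wtM Λ a.toMultiset) 1 := by
  have h1 : (monomial a c : MvPolynomial (PV k n) K) = C c * monomial a 1 := by
    rw [C_mul_monomial, mul_one]
  rw [h1, map_mul, monomial_toMultiset, mfMap_prod_X, prod_mfTerm]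
  have h2 : mfMap K Λ (C c) = C c := by simp [mfMap]
  rw [h2, ← mul_assoc, ← C_mul, mul_comm c]

lemma coeff_mfMap (f : MvPolynomial (PV k n) K) (w : (Fin k × Fin n) →₀ ℕ) :
    coeff w (mfMap K Λ f) = ∑ a ∈ f.support,
      (if wtM Λ a.toMultiset = w then ((mfSign Λ a.toMultiset : ℤ) : K) * f.coeff a else 0) := by
  classical
  conv_lhs => rw [f.as_sum, map_sum, coeff_sum]
  refine Finset.sum_congr rfl fun a _ => ?_
  rw [mfMap_monomial, coeff_C_mul, coeff_monomial]
  split <;> simp [mul_comm]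

lemma epsK_sq (A : Multiset (PV k n)) :
    ((mfSign Λ A : ℤ) : K) * ((mfSign Λ A : ℤ) : K) = 1 := by
  rw [← Int.cast_mul, mfSign_mul_self, Int.cast_one]

lemma intCast_eq_C (z : ℤ) {σ : Type*} :
    ((z : ℤ) : MvPolynomial σ K) = C ((z : ℤ) : K) :=
  (map_intCast (C : K →+* MvPolynomial σ K) z).symm

lemma mfMap_binomial {A B : Multiset (PV k n)} (h : wtM Λ A = wtM Λ B) :
    mfMap K Λ (mfBinomial K Λ A B) = 0 := by
  rw [mfBinomial, map_sub, map_mul, map_mul, map_intCast, map_intCast,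
    mfMap_prod_X, mfMap_prod_X, prod_mfTerm, prod_mfTerm,
    intCast_eq_C K (mfSign Λ A), intCast_eq_C K (mfSign Λ B),
    ← mul_assoc, ← mul_assoc, ← C_mul, ← C_mul, epsK_sq, epsK_sq, C_1, one_mul, one_mul, h,
    sub_self]

lemma mfBinomial_toMultiset (a b : PV k n →₀ ℕ) :
    mfBinomial K Λ a.toMultiset b.toMultiset
      = C ((mfSign Λ a.toMultiset : ℤ) : K) * monomial a 1
        - C ((mfSign Λ b.toMultiset : ℤ) : K) * monomial b 1 := by
  rw [mfBinomial, ← monomial_toMultiset, ← monomial_toMultiset,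
    intCast_eq_C K (mfSign Λ a.toMultiset), intCast_eq_C K (mfSign Λ b.toMultiset)]

end Aux

/-- **Proposition (matching field ideals are toric).** -/
theorem mfIdeal_eq_span_binomials
    (K : Type) [Field K] (k n : ℕ) (hk : 1 ≤ k) (hkn : k ≤ n)
    (Λ : MatchingField k n) :
    Ideal.span {f : MvPolynomial (PV k n) K |
        ∃ A B : Multiset (PV k n), Multiset.card A = Multiset.card B ∧
          RowwiseEqual Λ A B ∧ f = mfBinomial K Λ A B}
      = mfIdeal K Λ := by
  classical
  set J : Ideal (MvPolynomial (PV k n) K) := Ideal.span {f : MvPolynomial (PV k n) K |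
        ∃ A B : Multiset (PV k n), Multiset.card A = Multiset.card B ∧
          RowwiseEqual Λ A B ∧ f = mfBinomial K Λ A B} with hJdef
  have hJle : J ≤ mfIdeal K Λ := by
    rw [hJdef, Ideal.span_le]
    rintro f ⟨A, B, -, hrow, rfl⟩
    have hw := (rowwise_iff Λ A B).mp hrow
    exact mfMap_binomial K Λ hw
  have hgen : ∀ a b : PV k n →₀ ℕ, wtM Λ a.toMultiset = wtM Λ b.toMultiset →
      mfBinomial K Λ a.toMultiset b.toMultiset ∈ J := by
    intro a b hw
    have hrow := (rowwise_iff Λ a.toMultiset b.toMultiset).mpr hw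
    exact Ideal.subset_span ⟨a.toMultiset, b.toMultiset,
      card_eq_of_rowwise Λ hk hrow, hrow, rfl⟩
  have H : ∀ N : ℕ, ∀ g : MvPolynomial (PV k n) K, g.support.card ≤ N →
      mfMap K Λ g = 0 → g ∈ J := by
    intro N
    induction N with
    | zero =>
        intro g hs _
        have hg : g = 0 := support_eq_empty.mp (Finset.card_eq_zero.mp (Nat.le_zero.mp hs))
        simp [hg]
    | succ N ih =>
        intro g hs hg0
        by_cases hg : g = 0
        · simp [hg]
        obtain ⟨a₀, ha₀⟩ := support_nonempty.mpr hg
        set S : Finset (PV k n →₀ ℕ) :=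
          g.support.filter (fun a => wtM Λ a.toMultiset = wtM Λ a₀.toMultiset) with hSdef
        have ha₀S : a₀ ∈ S := Finset.mem_filter.mpr ⟨ha₀, rfl⟩
        have hSsub : S ⊆ g.support := Finset.filter_subset _ _
        have hsum : ∑ a ∈ S, g.coeff a * ((mfSign Λ a.toMultiset : ℤ) : K) = 0 := by
          have h1 : coeff (wtM Λ a₀.toMultiset) (mfMap K Λ g) = 0 := by
            rw [hg0, coeff_zero]
          rw [coeff_mfMap] at h1
          rw [hSdef, Finset.sum_filter]
          refine Eq.trans (Finset.sum_congr rfl fun a _ => ?_) h1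
          rcases em (wtM Λ a.toMultiset = wtM Λ a₀.toMultiset) with hp | hp
          · rw [if_pos hp, if_pos hp, mul_comm]
          · rw [if_neg hp, if_neg hp]
        set h : MvPolynomial (PV k n) K :=
          ∑ a ∈ S, (g.coeff a * ((mfSign Λ a.toMultiset : ℤ) : K)) •
            mfBinomial K Λ a.toMultiset a₀.toMultiset with hhdef
        have hhJ : h ∈ J := by
          refine Ideal.sum_mem _ fun a ha => Submodule.smul_of_tower_mem _ _ ?_
          exact hgen a a₀ (Finset.mem_filter.mp ha).2
        have hterm : ∀ a ∈ S, (g.coeff a * ((mfSign Λ a.toMultiset : ℤ) : K)) •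
              mfBinomial K Λ a.toMultiset a₀.toMultiset
            = monomial a (g.coeff a)
              - monomial a₀ ((g.coeff a * ((mfSign Λ a.toMultiset : ℤ) : K)) *
                  ((mfSign Λ a₀.toMultiset : ℤ) : K)) := by
          intro a ha
          rw [mfBinomial_toMultiset, smul_sub, smul_eq_C_mul, smul_eq_C_mul,
            ← mul_assoc, ← mul_assoc, ← C_mul, ← C_mul, C_mul_monomial, C_mul_monomial,
            mul_one, mul_one, mul_assoc (g.coeff a), epsK_sq, mul_one]
        have hh : h = ∑ a ∈ S, monomial a (g.coeff a) := by
          rw [hhdef, Finset.sum_congr rfl hterm, Finset.sum_sub_distrib]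
          have h2 : ∑ a ∈ S, (monomial a₀) ((g.coeff a * ((mfSign Λ a.toMultiset : ℤ) : K)) *
              ((mfSign Λ a₀.toMultiset : ℤ) : K)) = 0 := by
            rw [← map_sum, ← Finset.sum_mul, hsum, zero_mul, map_zero]
          rw [h2, sub_zero]
        have hgh : mfMap K Λ h = 0 := hJle hhJ
        set g' : MvPolynomial (PV k n) K := g - h with hg'def
        have hg'0 : mfMap K Λ g' = 0 := by
          rw [hg'def, map_sub, hg0, hgh, sub_zero]
        have hcoeffh : ∀ b, h.coeff b = if b ∈ S then g.coeff b else 0 := by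
          intro b
          rw [hh]
          simp [MvPolynomial.coeff_sum, coeff_monomial, Finset.sum_ite_eq']
        have hsupp : g'.support ⊆ g.support \ S := by
          intro b hb
          rw [mem_support_iff] at hb
          rw [hg'def, coeff_sub, hcoeffh] at hb
          by_cases hbS : b ∈ S
          · rw [if_pos hbS, sub_self] at hb; exact absurd rfl hb
          · rw [if_neg hbS, sub_zero] at hb
            exact Finset.mem_sdiff.mpr ⟨mem_support_iff.mpr hb, hbS⟩
        have hcard : g'.support.card ≤ N := by
          have h3 : (g.support \ S).card < g.support.card := by
            refine Finset.card_lt_card ?_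
            refine ⟨Finset.sdiff_subset, fun hsub => ?_⟩
            have := hsub (hSsub ha₀S)
            exact (Finset.mem_sdiff.mp this).2 ha₀S
          have h4 := Finset.card_le_card hsupp
          omega
        have hgJ' : g' ∈ J := ih g' hcard hg'0
        have : g = g' + h := by rw [hg'def, sub_add_cancel]
        rw [this]
        exact Ideal.add_mem _ hgJ' hhJ
  refine le_antisymm hJle fun f hf => H f.support.card f le_rfl hf
end

section
/- Let BΛ_a be a block diagonal matching field of size 3×n with blocks I_1,…,I_r. For a BΛ_a-tableau T of size 3×d with columns corresponding to the 3-subsets I^{(1)},…,I^{(d)}, define α(T) = #{t : |I^{(t)} ∩ I_1| = 3}, β(T) = #{t : |I^{(t)} ∩ I_1| = 2}, γ(T) = #{t : |I^{(t)} ∩ I_1| = 1}. If two BΛ_a-tableaux T and T' of size 3×d are row-wise equal, then α(T) = α(T'), β(T) = β(T'), and γ(T) = γ(T'); consequently the matching field ideal I_{BΛ_a} is homogeneous with respect to the Z^4 grading assigning P_I the degree (α,β,γ,1−α−β−γ) of its column. -/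
open MvPolynomial

open MvPolynomial

/-- The (zero-indexed) block index of `j ∈ [n]` for blocks of sizes `a 0, a 1, …, a (r-1)`:
the number of `t < r` with `α_{t+1} = a 0 + ⋯ + a t ≤ j`. -/
def blkIdx (r : ℕ) (a : ℕ → ℕ) (j : ℕ) : ℕ :=
  ((Finset.range r).filter (fun t => (∑ u ∈ Finset.range (t + 1), a u) ≤ j)).card

/-- The block diagonal matching field `BΛ_a` of size `3 × n` with `r` blocks of sizes
`a 0, …, a (r-1)`: with `s` minimal such that `I ∩ I_s ≠ ∅` (the block of the minimum of `I`),
it assigns the transposition `(12)` if `|I ∩ I_s| = 1` and the identity if `|I ∩ I_s| ≥ 2`. -/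
noncomputable def blockMF (r : ℕ) (a : ℕ → ℕ) (n : ℕ) : MatchingField 3 n :=
  fun I =>
    if (I.1.filter (fun j : Fin n =>
        blkIdx r a (j : ℕ) = blkIdx r a ((elt I 0 : Fin n) : ℕ))).card = 1
    then Equiv.swap 0 1
    else 1

/-- `|I ∩ I₁|`: the number of elements of `I` in the first block `I₁ = {j : j < a 0}`. -/
def firstBlockCount (a : ℕ → ℕ) {n : ℕ} (I : PV 3 n) : ℕ :=
  (I.1.filter (fun j : Fin n => (j : ℕ) < a 0)).card

open Classical in
/-- `α(T)`, `β(T)`, `γ(T)`: the numbers of columns `I` of the tableau `T` with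
`|I ∩ I₁| = 3`, `= 2`, `= 1` respectively (`c` is the prescribed intersection size). -/
noncomputable def colCount (a : ℕ → ℕ) {n : ℕ} (T : Multiset (PV 3 n)) (c : ℕ) : ℕ :=
  Multiset.countP (fun I => firstBlockCount a I = c) T

/-- The `ℤ⁴`- (here `ℕ⁴`-) degree `(α, β, γ, 1 − α − β − γ)` of the variable `P_I`. -/
def blockDeg (a : ℕ → ℕ) {n : ℕ} (I : PV 3 n) : Fin 4 → ℕ := fun t =>
  if t = 0 then (if firstBlockCount a I = 3 then 1 else 0)
  else if t = 1 then (if firstBlockCount a I = 2 then 1 else 0)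
  else if t = 2 then (if firstBlockCount a I = 1 then 1 else 0)
  else (if firstBlockCount a I = 0 then 1 else 0)

namespace BMF

variable {n : ℕ}

lemma blkIdx_eq_zero_iff {r : ℕ} (hr : 1 ≤ r) (a : ℕ → ℕ) (j : ℕ) :
    blkIdx r a j = 0 ↔ j < a 0 := by
  unfold blkIdx
  rw [Finset.card_eq_zero, Finset.filter_eq_empty_iff]
  constructor
  · intro h
    have h0 := h (Finset.mem_range.mpr hr)
    simp only [Finset.range_one, Finset.sum_singleton, not_le] at h0
    exact h0
  · intro hj t ht
    simp only [not_le]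
    calc j < a 0 := hj
      _ ≤ ∑ u ∈ Finset.range (t + 1), a u :=
        Finset.single_le_sum (fun i _ => Nat.zero_le _) (Finset.mem_range.mpr t.succ_pos)

lemma elt_mono (I : PV 3 n) {i j : Fin 3} (h : i ≤ j) : elt I i ≤ elt I j :=
  (I.1.orderIsoOfFin I.2).monotone h

lemma elt_zero_le (I : PV 3 n) {j : Fin n} (hj : j ∈ I.1) : elt I 0 ≤ j := by
  have h := (I.1.orderIsoOfFin I.2).monotone
    (Fin.zero_le ((I.1.orderIsoOfFin I.2).symm ⟨j, hj⟩))
  simp only [OrderIso.apply_symm_apply] at h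
  exact h

lemma card_filter_eq (I : PV 3 n) (p : Fin n → Prop) [DecidablePred p] :
    (I.1.filter p).card = (Finset.univ.filter fun i : Fin 3 => p (elt I i)).card := by
  have himg : I.1 = Finset.image (fun i : Fin 3 => elt I i) Finset.univ := by
    ext j
    simp only [Finset.mem_image, Finset.mem_univ, true_and]
    constructor
    · intro hj
      exact ⟨(I.1.orderIsoOfFin I.2).symm ⟨j, hj⟩, by simp [elt]⟩
    · rintro ⟨i, rfl⟩; exact elt_mem I i
  have hinj : Function.Injective (fun i : Fin 3 => elt I i) := fun i j h =>
    (I.1.orderIsoOfFin I.2).injective (Subtype.ext h)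
  rw [himg, Finset.filter_image, Finset.card_image_of_injective _ hinj]

lemma fbc_le_three (a : ℕ → ℕ) (I : PV 3 n) : firstBlockCount a I ≤ 3 :=
  le_of_le_of_eq (Finset.card_filter_le _ _) I.2

end BMF

namespace BMF
variable {n : ℕ}

lemma blockMF_eq {r : ℕ} (hr : 1 ≤ r) (a : ℕ → ℕ) (I : PV 3 n)
    (h0 : ((elt I 0 : Fin n) : ℕ) < a 0) :
    blockMF r a n I = if firstBlockCount a I = 1 then Equiv.swap 0 1 else 1 := by
  unfold blockMF firstBlockCount
  have hfilter : (I.1.filter (fun j : Fin n =>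
      blkIdx r a (j : ℕ) = blkIdx r a ((elt I 0 : Fin n) : ℕ))) =
      I.1.filter (fun j : Fin n => (j : ℕ) < a 0) := by
    apply Finset.filter_congr
    intro j _
    have he0 : blkIdx r a ((elt I 0 : Fin n) : ℕ) = 0 :=
      (blkIdx_eq_zero_iff hr a _).mpr h0
    rw [he0]
    exact blkIdx_eq_zero_iff hr a _
  rw [hfilter]

lemma elt_mono_val (I : PV 3 n) {i j : Fin 3} (h : i ≤ j) :
    ((elt I i : Fin n) : ℕ) ≤ ((elt I j : Fin n) : ℕ) :=
  elt_mono I h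

lemma key {r : ℕ} (hr : 1 ≤ r) (a : ℕ → ℕ) (I : PV 3 n) :
    ((firstBlockCount a I = 3) ↔ ((elt I (((blockMF r a n I))⁻¹ 2) : ℕ) < a 0)) ∧
    ((2 ≤ firstBlockCount a I) ↔ ((elt I (((blockMF r a n I))⁻¹ 0) : ℕ) < a 0)) ∧
    ((1 ≤ firstBlockCount a I) ↔ ((elt I (((blockMF r a n I))⁻¹ 1) : ℕ) < a 0)) := by
  classical
  have hfbc : firstBlockCount a I =
      (Finset.univ.filter fun i : Fin 3 => ((elt I i : Fin n) : ℕ) < a 0).card :=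
    card_filter_eq I _
  by_cases h0 : ((elt I 0 : Fin n) : ℕ) < a 0
  · have hmf := blockMF_eq hr a I h0
    by_cases h1 : ((elt I 1 : Fin n) : ℕ) < a 0
    · by_cases h2 : ((elt I 2 : Fin n) : ℕ) < a 0
      · have hc : firstBlockCount a I = 3 := by
          rw [hfbc, Finset.card_filter, Fin.sum_univ_three]
          simp [h0, h1, h2]
        rw [hmf, hc]
        norm_num
        exact ⟨h2, h0, h1⟩
      · have hc : firstBlockCount a I = 2 := by
          rw [hfbc, Finset.card_filter, Fin.sum_univ_three]
          simp [h0, h1, h2]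
        rw [hmf, hc]
        norm_num
        exact ⟨not_lt.mp h2, h0, h1⟩
    · have h2 : ¬ ((elt I 2 : Fin n) : ℕ) < a 0 := fun h2 =>
        h1 (lt_of_le_of_lt (elt_mono_val I (by decide : (1:Fin 3) ≤ 2)) h2)
      have hc : firstBlockCount a I = 1 := by
        rw [hfbc, Finset.card_filter, Fin.sum_univ_three]
        simp [h0, h1, h2]
      rw [hmf, hc]
      norm_num
      have e2 : (Equiv.swap (0:Fin 3) 1) 2 = 2 := by decide
      rw [e2]
      exact ⟨not_lt.mp h2, not_lt.mp h1, h0⟩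
  · have hall : ∀ i : Fin 3, ¬ ((elt I i : Fin n) : ℕ) < a 0 := by
      intro i hi
      exact h0 (lt_of_le_of_lt (elt_mono_val I (Fin.zero_le i)) hi)
    have hc : firstBlockCount a I = 0 := by
      rw [hfbc, Finset.card_filter, Fin.sum_univ_three]
      simp [hall 0, hall 1, hall 2]
    rw [hc]
    refine ⟨⟨fun h => absurd h (by norm_num), fun h => absurd h (hall _)⟩,
      ⟨fun h => absurd h (by norm_num), fun h => absurd h (hall _)⟩,
      ⟨fun h => absurd h (by norm_num), fun h => absurd h (hall _)⟩⟩

end BMF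

namespace BMF
variable {n : ℕ}

lemma countP_or {α : Type*} (p q : α → Prop) [DecidablePred p] [DecidablePred q]
    (h : ∀ x, ¬(p x ∧ q x)) (s : Multiset α) :
    Multiset.countP (fun x => p x ∨ q x) s = Multiset.countP p s + Multiset.countP q s := by
  induction s using Multiset.induction_on with
  | empty => simp
  | cons a s ih =>
    by_cases hp : p a
    · have hq : ¬ q a := fun hq => h a ⟨hp, hq⟩
      simp [Multiset.countP_cons, hp, hq, ih]
      omega
    · by_cases hq : q a <;> simp [Multiset.countP_cons, hp, hq, ih] <;> omega

open Classical in
lemma colCount_eq_row (r : ℕ) (hr : 1 ≤ r) (a : ℕ → ℕ) (T : Multiset (PV 3 n)) :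
    (colCount a T 3 = Multiset.countP (fun j : Fin n => (j : ℕ) < a 0)
        (T.map (fun I => elt I ((blockMF r a n I)⁻¹ 2)))) ∧
    (colCount a T 3 + colCount a T 2 = Multiset.countP (fun j : Fin n => (j : ℕ) < a 0)
        (T.map (fun I => elt I ((blockMF r a n I)⁻¹ 0)))) ∧
    (colCount a T 3 + colCount a T 2 + colCount a T 1 =
      Multiset.countP (fun j : Fin n => (j : ℕ) < a 0)
        (T.map (fun I => elt I ((blockMF r a n I)⁻¹ 1)))) := by
  have hmap : ∀ i : Fin 3, Multiset.countP (fun j : Fin n => (j : ℕ) < a 0)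
      (T.map (fun I => elt I ((blockMF r a n I)⁻¹ i))) =
      Multiset.countP (fun I : PV 3 n => ((elt I ((blockMF r a n I)⁻¹ i) : Fin n) : ℕ) < a 0) T := by
    intro i
    rw [Multiset.countP_map, Multiset.countP_eq_card_filter]
  refine ⟨?_, ?_, ?_⟩
  · rw [hmap]
    exact Multiset.countP_congr rfl fun I _ => by
      have := (key hr a I).1
      simp only [eq_iff_iff]; exact this
  · rw [hmap]
    have h2 : Multiset.countP (fun I : PV 3 n => 2 ≤ firstBlockCount a I) T =
        colCount a T 3 + colCount a T 2 := by
      simp only [colCount]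
      rw [← countP_or _ _ (fun I => by omega)]
      exact Multiset.countP_congr rfl fun I _ => by
        have h3 := fbc_le_three a I
        simp only [eq_iff_iff]; omega
    rw [← h2]
    exact Multiset.countP_congr rfl fun I _ => by
      have := (key hr a I).2.1
      simp only [eq_iff_iff]; exact this
  · rw [hmap]
    have h1 : Multiset.countP (fun I : PV 3 n => 1 ≤ firstBlockCount a I) T =
        colCount a T 3 + colCount a T 2 + colCount a T 1 := by
      simp only [colCount]
      calc Multiset.countP (fun I : PV 3 n => 1 ≤ firstBlockCount a I) T
          = Multiset.countP
              (fun I : PV 3 n => (firstBlockCount a I = 3 ∨ firstBlockCount a I = 2) ∨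
                firstBlockCount a I = 1) T :=
            Multiset.countP_congr rfl fun I _ => by
              have h3 := fbc_le_three a I
              simp only [eq_iff_iff]; omega
        _ = Multiset.countP
              (fun I : PV 3 n => firstBlockCount a I = 3 ∨ firstBlockCount a I = 2) T +
            Multiset.countP (fun I : PV 3 n => firstBlockCount a I = 1) T :=
            countP_or _ _ (fun I => by omega) T
        _ = Multiset.countP (fun I : PV 3 n => firstBlockCount a I = 3) T +
            Multiset.countP (fun I : PV 3 n => firstBlockCount a I = 2) T +
            Multiset.countP (fun I : PV 3 n => firstBlockCount a I = 1) T := by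
            rw [countP_or _ _ (fun I => by omega)]
    rw [← h1]
    exact Multiset.countP_congr rfl fun I _ => by
      have := (key hr a I).2.2
      simp only [eq_iff_iff]; exact this

lemma part1 {r : ℕ} (hr : 1 ≤ r) (a : ℕ → ℕ) (T T' : Multiset (PV 3 n))
    (h : RowwiseEqual (blockMF r a n) T T') :
    colCount a T 3 = colCount a T' 3 ∧ colCount a T 2 = colCount a T' 2 ∧
      colCount a T 1 = colCount a T' 1 := by
  obtain ⟨c3, c2, c1⟩ := colCount_eq_row r hr a T
  obtain ⟨c3', c2', c1'⟩ := colCount_eq_row r hr a T'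
  rw [h 2] at c3; rw [h 0] at c2; rw [h 1] at c1
  rw [← c3'] at c3; rw [← c2'] at c2; rw [← c1'] at c1
  omega

end BMF

namespace BMF
variable {n k : ℕ} (K : Type) [Field K]

/-- exponent vector of the monomial `x_{Λ(I)}`. -/
noncomputable def muE (Λ : MatchingField k n) (I : PV k n) : (Fin k × Fin n) →₀ ℕ :=
  ∑ r : Fin k, Finsupp.single (Λ I r, elt I r) 1

/-- exponent vector of the image of a monomial under `φ_Λ`. -/
noncomputable def Emap (Λ : MatchingField k n) (m : PV k n →₀ ℕ) : (Fin k × Fin n) →₀ ℕ :=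
  m.sum fun I c => c • muE Λ I

/-- the sign of the image of a monomial. -/
noncomputable def eps (Λ : MatchingField k n) (m : PV k n →₀ ℕ) : K :=
  m.prod fun I c => (((Equiv.Perm.sign (Λ I) : ℤ) : K)) ^ c

lemma Emap_add (Λ : MatchingField k n) (m m' : PV k n →₀ ℕ) :
    Emap Λ (m + m') = Emap Λ m + Emap Λ m' :=
  Finsupp.sum_add_index' (fun I => zero_smul _ _) (fun I c c' => add_smul c c' (muE Λ I))

lemma Emap_single (Λ : MatchingField k n) (I : PV k n) (c : ℕ) :
    Emap Λ (Finsupp.single I c) = c • muE Λ I :=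
  Finsupp.sum_single_index (zero_smul _ _)

lemma mfMon_eq (Λ : MatchingField k n) (I : PV k n) :
    mfMon K Λ I = monomial (muE Λ I) 1 := by
  unfold mfMon muE
  induction (Finset.univ : Finset (Fin k)) using Finset.induction with
  | empty => simp
  | insert _ _ hni ih =>
    rw [Finset.prod_insert hni, Finset.sum_insert hni, ih, ← pow_one (X _),
      X_pow_eq_monomial, monomial_mul, one_mul]

lemma mfTerm_pow (Λ : MatchingField k n) (I : PV k n) (c : ℕ) :
    mfTerm K Λ I ^ c =
      monomial (c • muE Λ I) ((((Equiv.Perm.sign (Λ I) : ℤ) : K)) ^ c) := by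
  rw [mfTerm, mfMon_eq, mul_pow, monomial_pow, one_pow]
  have : ((Equiv.Perm.sign (Λ I) : ℤ) : MvPolynomial (Fin k × Fin n) K) =
      C (((Equiv.Perm.sign (Λ I) : ℤ) : K)) := by
    rw [map_intCast (C : K →+* MvPolynomial (Fin k × Fin n) K)]
  rw [this, ← C_pow, C_mul_monomial, mul_one]

lemma prod_mfTerm (Λ : MatchingField k n) (m : PV k n →₀ ℕ) :
    (m.prod fun I c => mfTerm K Λ I ^ c) = monomial (Emap Λ m) (eps K Λ m) := by
  induction m using Finsupp.induction with
  | zero => simp [Emap, eps]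
  | single_add I c m hIm hc ih =>
    rw [Finsupp.prod_add_index' (fun _ => pow_zero _) (fun _ c c' => pow_add _ c c'),
      Finsupp.prod_single_index (h := fun J c => mfTerm K Λ J ^ c) (pow_zero _), ih,
      mfTerm_pow, monomial_mul, Emap_add, Emap_single]
    congr 1
    rw [eps, eps, Finsupp.prod_add_index' (fun _ => pow_zero _) (fun _ c c' => pow_add _ c c'),
      Finsupp.prod_single_index
        (h := fun (J : PV k n) c => (((Equiv.Perm.sign (Λ J) : ℤ) : K)) ^ c) (pow_zero _)]

lemma mfMap_monomial (Λ : MatchingField k n) (m : PV k n →₀ ℕ) (c : K) :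
    mfMap K Λ (monomial m c) = monomial (Emap Λ m) (eps K Λ m * c) := by
  rw [mfMap, aeval_monomial, prod_mfTerm, algebraMap_eq, C_mul_monomial, mul_comm c]

lemma mfMap_eq_sum (Λ : MatchingField k n) (f : MvPolynomial (PV k n) K) :
    mfMap K Λ f = ∑ m ∈ f.support, monomial (Emap Λ m) (eps K Λ m * f.coeff m) := by
  conv_lhs => rw [f.as_sum]
  rw [map_sum]
  exact Finset.sum_congr rfl fun m _ => mfMap_monomial K Λ m _

end BMF

namespace BMF
variable {n k : ℕ} (K : Type) [Field K]

lemma muE_apply (Λ : MatchingField k n) (I : PV k n) (i : Fin k) (j : Fin n) :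
    muE Λ I (i, j) = if elt I ((Λ I)⁻¹ i) = j then 1 else 0 := by
  classical
  rw [muE, Finset.sum_apply']
  rw [← Equiv.sum_comp (Λ I)⁻¹ (fun r => (Finsupp.single ((Λ I) r, elt I r) (1:ℕ)) (i, j))]
  simp only [Finsupp.single_apply, Prod.mk.injEq, Equiv.Perm.coe_inv, Equiv.apply_symm_apply]
  simp [ite_and, Finset.sum_ite_eq']

end BMF

namespace BMF
variable {n k : ℕ}

lemma Emap_apply (Λ : MatchingField k n) (m : PV k n →₀ ℕ) (i : Fin k) (j : Fin n) :
    Emap Λ m (i, j) = (Finsupp.mapDomain (fun I : PV k n => elt I ((Λ I)⁻¹ i)) m) j := by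
  classical
  rw [Emap, Finsupp.sum_apply, Finsupp.mapDomain, Finsupp.sum_apply]
  apply Finsupp.sum_congr
  intro I _
  rw [Finsupp.smul_apply, muE_apply, Finsupp.single_apply, smul_eq_mul]
  split <;> simp

lemma rowwise_of_Emap (Λ : MatchingField k n) {m m' : PV k n →₀ ℕ}
    (h : Emap Λ m = Emap Λ m') :
    RowwiseEqual Λ m.toMultiset m'.toMultiset := by
  intro i
  classical
  rw [Finsupp.toMultiset_map, Finsupp.toMultiset_map]
  congr 1
  ext j
  rw [← Emap_apply, ← Emap_apply, h]

lemma countP_replicate (p : PV 3 n → Prop) [DecidablePred p] (I : PV 3 n) (c : ℕ) :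
    Multiset.countP p (Multiset.replicate c I) = if p I then c else 0 := by
  induction c with
  | zero => simp
  | succ c ih =>
    rw [Multiset.replicate_succ, Multiset.countP_cons, ih]
    split <;> simp

lemma countP_toMultiset (p : PV 3 n → Prop) [DecidablePred p] (m : PV 3 n →₀ ℕ) :
    Multiset.countP p m.toMultiset = m.sum fun I c => if p I then c else 0 := by
  induction m using Finsupp.induction with
  | zero => simp
  | single_add I c m hIm hc ih =>
    rw [Finsupp.toMultiset_add, Multiset.countP_add, ih, Finsupp.toMultiset_single,
      Finsupp.sum_add_index' (fun _ => by simp) (fun _ c c' => by split <;> simp),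
      Finsupp.sum_single_index (by simp), Multiset.nsmul_singleton]
    rw [countP_replicate]

lemma weight_apply_t (a : ℕ → ℕ) (m : PV 3 n →₀ ℕ) (t : Fin 4) :
    (Finsupp.weight (blockDeg a) m) t = m.sum fun I c => c * blockDeg a I t := by
  rw [Finsupp.weight_apply, Finsupp.sum, Finset.sum_apply, Finsupp.sum]
  exact Finset.sum_congr rfl fun I _ => rfl

lemma blockDeg_eq (a : ℕ → ℕ) (I : PV 3 n) (t : Fin 4) :
    blockDeg a I t = if firstBlockCount a I = 3 - (t : ℕ) then 1 else 0 := by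
  fin_cases t <;> simp [blockDeg]

open Classical in
lemma weight_eq_colCount (a : ℕ → ℕ) (m : PV 3 n →₀ ℕ) (t : Fin 4) :
    (Finsupp.weight (blockDeg a) m) t = colCount a m.toMultiset (3 - (t : ℕ)) := by
  rw [weight_apply_t, colCount, countP_toMultiset]
  apply Finsupp.sum_congr
  intro I _
  rw [blockDeg_eq]
  split <;> simp

end BMF

namespace BMF
variable {n : ℕ}

open Classical in
lemma count_total (a : ℕ → ℕ) (T : Multiset (PV 3 n)) :
    colCount a T 0 + (colCount a T 3 + colCount a T 2 + colCount a T 1) =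
      Multiset.card T := by
  simp only [colCount]
  rw [← countP_or (fun I : PV 3 n => firstBlockCount a I = 3)
      (fun I => firstBlockCount a I = 2) (fun I => by omega),
    ← countP_or (fun I : PV 3 n => firstBlockCount a I = 3 ∨ firstBlockCount a I = 2)
      (fun I => firstBlockCount a I = 1) (fun I => by omega),
    ← countP_or (fun I : PV 3 n => firstBlockCount a I = 0)
      (fun I => (firstBlockCount a I = 3 ∨ firstBlockCount a I = 2) ∨
        firstBlockCount a I = 1) (fun I => by omega)]
  calc Multiset.countP _ T = Multiset.countP (fun _ => True) T :=
        Multiset.countP_congr rfl fun I _ => by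
          have h3 := fbc_le_three a I
          simp only [eq_iff_iff, iff_true]
          omega
    _ = Multiset.card T := Multiset.countP_True

lemma deg_compat {r : ℕ} (hr : 1 ≤ r) (a : ℕ → ℕ) {m m' : PV 3 n →₀ ℕ}
    (h : Emap (blockMF r a n) m = Emap (blockMF r a n) m') :
    Finsupp.weight (blockDeg a) m = Finsupp.weight (blockDeg a) m' := by
  have hrw := rowwise_of_Emap _ h
  obtain ⟨h3, h2, h1⟩ := part1 hr a _ _ hrw
  have hcard : Multiset.card m.toMultiset = Multiset.card m'.toMultiset := by
    have h0' := hrw 0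
    calc Multiset.card m.toMultiset
        = Multiset.card (m.toMultiset.map
            (fun I => elt I (((blockMF r a n I))⁻¹ 0))) := (Multiset.card_map _ _).symm
      _ = Multiset.card (m'.toMultiset.map
            (fun I => elt I (((blockMF r a n I))⁻¹ 0))) := by rw [h0']
      _ = Multiset.card m'.toMultiset := Multiset.card_map _ _
  have hc0 : colCount a m.toMultiset 0 = colCount a m'.toMultiset 0 := by
    have k1 := count_total a m.toMultiset
    have k2 := count_total a m'.toMultiset
    omega
  funext t
  rw [weight_eq_colCount, weight_eq_colCount]
  have ht : (t : ℕ) = 0 ∨ (t : ℕ) = 1 ∨ (t : ℕ) = 2 ∨ (t : ℕ) = 3 := by omega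
  rcases ht with ht | ht | ht | ht <;> rw [ht] <;>
    first
      | exact h3 | exact h2 | exact h1 | exact hc0
      | (simp only [Nat.sub_self]; exact hc0)
end BMF

/-- **Lemma (the `ℤ⁴`-grading of block diagonal matching field ideals).** If two
`BΛ_a`-tableaux of size `3 × d` are row-wise equal then their statistics `α`, `β`, `γ`
coincide; consequently the matching field ideal `I_{BΛ_a}` is homogeneous with respect to the
grading assigning to `P_I` the degree `(α, β, γ, 1 − α − β − γ)` of its column. -/
theorem blockMF_rowwiseEqual_grading
    (K : Type) [Field K] (n : ℕ) (hn : 3 ≤ n)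
    (r : ℕ) (hr : 1 ≤ r) (a : ℕ → ℕ) (hpos : ∀ s < r, 0 < a s)
    (hsum : ∑ s ∈ Finset.range r, a s = n) :
    (∀ T T' : Multiset (PV 3 n), RowwiseEqual (blockMF r a n) T T' →
        colCount a T 3 = colCount a T' 3 ∧
        colCount a T 2 = colCount a T' 2 ∧
        colCount a T 1 = colCount a T' 1) ∧
    (∀ f ∈ mfIdeal K (blockMF r a n), ∀ d : Fin 4 → ℕ,
        weightedHomogeneousComponent (blockDeg a) d f ∈ mfIdeal K (blockMF r a n)) := by
  classical
  constructor
  · exact fun T T' h => BMF.part1 hr a T T' h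
  · intro f hf d
    set Λ := blockMF r a n with hΛ
    have hker : mfMap K Λ f = 0 := hf
    set g := weightedHomogeneousComponent (blockDeg a) d f with hg
    show (mfMap K Λ).toRingHom g = 0
    show mfMap K Λ g = 0
    have hf0 : ∀ e : (Fin 3 × Fin n) →₀ ℕ,
        (∑ m ∈ f.support, if BMF.Emap Λ m = e then BMF.eps K Λ m * f.coeff m else 0) = 0 := by
      intro e
      have hc := congrArg (MvPolynomial.coeff e) hker
      rw [BMF.mfMap_eq_sum, MvPolynomial.coeff_sum] at hc
      simp only [coeff_monomial, coeff_zero] at hc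
      exact hc
    apply MvPolynomial.ext
    intro e
    rw [BMF.mfMap_eq_sum, MvPolynomial.coeff_sum]
    simp only [coeff_monomial, coeff_zero]
    have hsub : g.support ⊆ f.support := by
      intro m hm
      rw [MvPolynomial.mem_support_iff] at hm ⊢
      intro hmf
      apply hm
      rw [hg, coeff_weightedHomogeneousComponent]
      split <;> simp [hmf]
    rw [Finset.sum_subset hsub (fun m _ hmg => by
      rw [MvPolynomial.notMem_support_iff] at hmg
      rw [hmg, mul_zero, ite_self])]
    by_cases hex : ∃ m0 ∈ f.support, BMF.Emap Λ m0 = e ∧ Finsupp.weight (blockDeg a) m0 = d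
    · obtain ⟨m0, hm0f, hm0e, hm0d⟩ := hex
      conv_rhs => rw [← hf0 e]
      apply Finset.sum_congr rfl
      intro m _
      by_cases hme : BMF.Emap Λ m = e
      · rw [if_pos hme, if_pos hme]
        congr 1
        rw [hg, coeff_weightedHomogeneousComponent, if_pos]
        rw [← hm0d]
        exact BMF.deg_compat hr a (hme.trans hm0e.symm)
      · rw [if_neg hme, if_neg hme]
    · apply Finset.sum_eq_zero
      intro m hm
      by_cases hme : BMF.Emap Λ m = e
      · rw [if_pos hme]
        have hz : g.coeff m = 0 := by
          rw [hg, coeff_weightedHomogeneousComponent, if_neg]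
          intro hd
          exact hex ⟨m, hm, hme, hd⟩
        rw [hz, mul_zero]
      · rw [if_neg hme]
end
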